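/- arXiv:2403.05096 — 5 statements merged into one kernel-verified Lean document; each statement's English description precedes it below -/
import Mathlib

section
/- Let the zero set be N := {(τ,j) ∈ ℤ^m × ℕ : ‖σ(τ,j)‖ = 0}. The system is globally hypoelliptic at the Fourier coefficient level if and only if N is finite and the Diophantine condition (DC) holds. -/
/-!
Both directions rest on the fact that the weight `w` has finite sublevel sets, so that a
sequence has GS-decay as soon as it has it off a finite set, and a GS-decaying sequence is
`≥ 1` only finitely often. If the system is globally hypoelliptic, the indicator `u` of
`{‖σ‖ ≤ exp(-ε w)}` is bounded and every `σ_r u` decays, so `u` decays and this set is finite;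
it contains the zero set, and off it the lower bound of (DC) holds. Conversely, if
`σ_r u` decays for all `r` then `‖σ‖ ‖u‖ ≤ C exp(-ε w)`, and (DC) with `ε / 2` turns this into
`‖u‖ ≤ C' exp(-ε w / 2)` off the finite zero set.
-/

open Real

/-- Euclidean norm of an integer vector `τ ∈ ℤ^m`. -/
noncomputable def eNormZ {m : ℕ} (τ : Fin m → ℤ) : ℝ :=
  Real.sqrt (∑ i, ((τ i : ℝ)) ^ 2)

/-- The weight `w(τ,j) = ‖τ‖^(1/σ) + j^(1/(2nμ))`. -/
noncomputable def wgt (m n : ℕ) (σ μ : ℝ) (τ : Fin m → ℤ) (j : ℕ) : ℝ :=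
  eNormZ τ ^ (1 / σ) + (j : ℝ) ^ (1 / (2 * n * μ))

/-- GS-decay: `|a(τ,j)| ≤ C exp(-ε w(τ,j))` for some `C, ε > 0`. -/
def GSDecay (m n : ℕ) (σ μ : ℝ) (a : (Fin m → ℤ) → ℕ → ℂ) : Prop :=
  ∃ C > 0, ∃ ε > 0, ∀ τ j, ‖a τ j‖ ≤ C * Real.exp (-ε * wgt m n σ μ τ j)

/-- GS-growth: for all `ε > 0` there is `C > 0` with `|a(τ,j)| ≤ C exp(ε w(τ,j))`. -/
def GSGrowth (m n : ℕ) (σ μ : ℝ) (a : (Fin m → ℤ) → ℕ → ℂ) : Prop :=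
  ∀ ε > 0, ∃ C > 0, ∀ τ j, ‖a τ j‖ ≤ C * Real.exp (ε * wgt m n σ μ τ j)

/-- Symbol of the operator `L_r = Q_r(D_t) + d_r P(x,D_x)`: `σ_r(τ,j) = Q_r(τ) + d_r λ_j`. -/
noncomputable def symb {m ℓ : ℕ} (Q : Fin ℓ → MvPolynomial (Fin m) ℂ)
    (d : Fin ℓ → ℂ) (lam : ℕ → ℝ) (r : Fin ℓ) (τ : Fin m → ℤ) (j : ℕ) : ℂ :=
  MvPolynomial.eval (fun i => ((τ i : ℂ))) (Q r) + d r * (lam j : ℂ)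

/-- `‖σ(τ,j)‖ = max_{1 ≤ r ≤ ℓ} |σ_r(τ,j)|`. -/
noncomputable def symbNorm {m ℓ : ℕ} (Q : Fin ℓ → MvPolynomial (Fin m) ℂ)
    (d : Fin ℓ → ℂ) (lam : ℕ → ℝ) (τ : Fin m → ℤ) (j : ℕ) : ℝ :=
  ⨆ r : Fin ℓ, ‖symb Q d lam r τ j‖

/-- The Diophantine condition (DC). -/
def DioCond (m n ℓ : ℕ) (σ μ : ℝ) (Q : Fin ℓ → MvPolynomial (Fin m) ℂ)
    (d : Fin ℓ → ℂ) (lam : ℕ → ℝ) : Prop :=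
  ∀ ε > 0, ∃ C > 0, ∀ τ j, symbNorm Q d lam τ j ≠ 0 →
    symbNorm Q d lam τ j ≥ C * Real.exp (-ε * wgt m n σ μ τ j)

/-- Global hypoellipticity at the Fourier coefficient level. -/
def GloballyHypoelliptic (m n ℓ : ℕ) (σ μ : ℝ) (Q : Fin ℓ → MvPolynomial (Fin m) ℂ)
    (d : Fin ℓ → ℂ) (lam : ℕ → ℝ) : Prop :=
  ∀ u : (Fin m → ℤ) → ℕ → ℂ, GSGrowth m n σ μ u →
    (∀ r : Fin ℓ, GSDecay m n σ μ (fun τ j => symb Q d lam r τ j * u τ j)) →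
    GSDecay m n σ μ u

/-- Admissible families (compatibility conditions). -/
def Admissible {m ℓ : ℕ} (Q : Fin ℓ → MvPolynomial (Fin m) ℂ) (d : Fin ℓ → ℂ)
    (lam : ℕ → ℝ) (f : Fin ℓ → (Fin m → ℤ) → ℕ → ℂ) : Prop :=
  (∀ r s τ j, symb Q d lam r τ j * f s τ j = symb Q d lam s τ j * f r τ j) ∧
  (∀ r τ j, symb Q d lam r τ j = 0 → f r τ j = 0)

/-- Global solvability at the Fourier coefficient level. -/
def GloballySolvable (m n ℓ : ℕ) (σ μ : ℝ) (Q : Fin ℓ → MvPolynomial (Fin m) ℂ)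
    (d : Fin ℓ → ℂ) (lam : ℕ → ℝ) : Prop :=
  ∀ f : Fin ℓ → (Fin m → ℤ) → ℕ → ℂ, Admissible Q d lam f →
    (∀ r, GSGrowth m n σ μ (f r)) →
    ∃ u : (Fin m → ℤ) → ℕ → ℂ, GSGrowth m n σ μ u ∧
      ∀ r τ j, symb Q d lam r τ j * u τ j = f r τ j

open Filter Topology

lemma exists_pos_forall_le_of_finite {ι : Type*} {s : Set ι} (hs : s.Finite) {f : ι → ℝ}
    (hf : ∀ i ∈ s, 0 < f i) : ∃ c > 0, ∀ i ∈ s, c ≤ f i := by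
  have h : ∀ᶠ c in 𝓝[>] (0 : ℝ), ∀ i ∈ s, c ≤ f i :=
    (eventually_all_finite hs).2 fun i hi =>
      ((eventually_lt_nhds (hf i hi)).filter_mono nhdsWithin_le_nhds).mono fun _ => le_of_lt
  obtain ⟨c, hcs, hc⟩ := (h.and self_mem_nhdsWithin).exists
  exact ⟨c, hc, hcs⟩

lemma mul_exp_mul_exp_neg_mul (a ε w : ℝ) : a * exp (ε * w) * exp (-ε * w) = a := by
  rw [mul_assoc, ← exp_add, neg_mul, add_neg_cancel, exp_zero, mul_one]

section Weight

variable {m n : ℕ} {σ μ : ℝ}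

lemma eNormZ_nonneg (τ : Fin m → ℤ) : 0 ≤ eNormZ τ := Real.sqrt_nonneg _

lemma abs_le_eNormZ (τ : Fin m → ℤ) (i : Fin m) : |(τ i : ℝ)| ≤ eNormZ τ := by
  rw [← Real.sqrt_sq_eq_abs]
  exact Real.sqrt_le_sqrt (Finset.single_le_sum (fun k _ => sq_nonneg (τ k : ℝ)) (Finset.mem_univ i))

lemma finite_setOf_eNormZ_le (R : ℝ) : {τ : Fin m → ℤ | eNormZ τ ≤ R}.Finite := by
  refine (Set.Finite.pi' fun _ => Set.finite_Icc (-⌊R⌋) ⌊R⌋).subset fun τ hτ i =>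
    abs_le.1 (Int.le_floor.2 ?_)
  push_cast
  exact (abs_le_eNormZ τ i).trans hτ

lemma wgt_nonneg (τ : Fin m → ℤ) (j : ℕ) : 0 ≤ wgt m n σ μ τ j :=
  add_nonneg (Real.rpow_nonneg (eNormZ_nonneg τ) _) (Real.rpow_nonneg j.cast_nonneg _)

lemma finite_setOf_wgt_le (hσ : 0 < σ) (hnμ : 0 < 2 * (n : ℝ) * μ) (M : ℝ) :
    {p : (Fin m → ℤ) × ℕ | wgt m n σ μ p.1 p.2 ≤ M}.Finite := by
  refine ((finite_setOf_eNormZ_le (M ^ σ)).prod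
    (Set.finite_Iic ⌊M ^ (2 * (n : ℝ) * μ)⌋₊)).subset ?_
  rintro ⟨τ, j⟩ (hp : wgt m n σ μ τ j ≤ M)
  have hτ := Real.rpow_nonneg (eNormZ_nonneg τ) (1 / σ)
  have hj := Real.rpow_nonneg j.cast_nonneg (1 / (2 * (n : ℝ) * μ))
  have hM : 0 ≤ M := (wgt_nonneg τ j).trans hp
  unfold wgt at hp
  refine ⟨?_, Nat.le_floor ?_⟩
  · exact (Real.rpow_inv_le_iff_of_pos (eNormZ_nonneg τ) hM hσ).1 (by rw [← one_div]; linarith)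
  · exact (Real.rpow_inv_le_iff_of_pos j.cast_nonneg hM hnμ).1 (by rw [← one_div]; linarith)

end Weight

section Decay

variable {m n : ℕ} {σ μ : ℝ}

lemma gsGrowth_of_norm_le_one {u : (Fin m → ℤ) → ℕ → ℂ} (hu : ∀ τ j, ‖u τ j‖ ≤ 1) :
    GSGrowth m n σ μ u := fun ε hε =>
  ⟨1, one_pos, fun τ j => by
    rw [one_mul]
    exact (hu τ j).trans (one_le_exp (mul_nonneg hε.le (wgt_nonneg τ j)))⟩

lemma finite_setOf_one_le_norm_of_gsDecay (hσ : 0 < σ) (hnμ : 0 < 2 * (n : ℝ) * μ)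
    {u : (Fin m → ℤ) → ℕ → ℂ} (hu : GSDecay m n σ μ u) :
    {p : (Fin m → ℤ) × ℕ | 1 ≤ ‖u p.1 p.2‖}.Finite := by
  obtain ⟨C, hC, ε, hε, hb⟩ := hu
  refine (finite_setOf_wgt_le hσ hnμ (log C / ε)).subset ?_
  rintro ⟨τ, j⟩ (hp : 1 ≤ ‖u τ j‖)
  have hexp : exp (ε * wgt m n σ μ τ j) ≤ C := by
    have := hp.trans (hb τ j)
    rwa [neg_mul, exp_neg, ← div_eq_mul_inv, one_le_div (exp_pos _)] at this
  rw [Set.mem_ofPred_eq, le_div_iff₀ hε, mul_comm]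
  exact (le_log_iff_exp_le hC).2 hexp

lemma gsDecay_of_finite_of_forall_notMem {u : (Fin m → ℤ) → ℕ → ℂ}
    {S : Set ((Fin m → ℤ) × ℕ)} (hS : S.Finite) {C ε : ℝ} (hC : 0 < C) (hε : 0 < ε)
    (hu : ∀ τ j, (τ, j) ∉ S → ‖u τ j‖ ≤ C * exp (-ε * wgt m n σ μ τ j)) :
    GSDecay m n σ μ u := by
  obtain ⟨B, hB⟩ := (hS.image fun p => ‖u p.1 p.2‖ * exp (ε * wgt m n σ μ p.1 p.2)).bddAbove
  refine ⟨max C B, lt_max_of_lt_left hC, ε, hε, fun τ j => ?_⟩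
  by_cases hp : (τ, j) ∈ S
  · have hBp : ‖u τ j‖ * exp (ε * wgt m n σ μ τ j) ≤ B := hB ⟨_, hp, rfl⟩
    calc ‖u τ j‖ = ‖u τ j‖ * exp (ε * wgt m n σ μ τ j) * exp (-ε * wgt m n σ μ τ j) :=
          (mul_exp_mul_exp_neg_mul _ _ _).symm
      _ ≤ max C B * exp (-ε * wgt m n σ μ τ j) := by gcongr; exact hBp.trans (le_max_right C B)
  · exact (hu τ j hp).trans (by gcongr; exact le_max_left C B)

lemma exists_forall_norm_le_of_forall_gsDecay {ι : Type*} [Finite ι]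
    {a : ι → (Fin m → ℤ) → ℕ → ℂ} (ha : ∀ r, GSDecay m n σ μ (a r)) :
    ∃ C > 0, ∃ ε > 0, ∀ r τ j, ‖a r τ j‖ ≤ C * exp (-ε * wgt m n σ μ τ j) := by
  choose C hC ε hε hb using ha
  obtain ⟨ε₀, hε₀, hε₀le⟩ := exists_pos_forall_le_of_finite Set.finite_univ fun r _ => hε r
  obtain ⟨B, hB⟩ := (Set.finite_range C).bddAbove
  refine ⟨max B 1, lt_max_of_lt_right one_pos, ε₀, hε₀, fun r τ j => (hb r τ j).trans ?_⟩
  gcongr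
  · exact (hB ⟨r, rfl⟩).trans (le_max_left B 1)
  · exact wgt_nonneg τ j
  · exact hε₀le r trivial

end Decay

section Symbol

variable {m ℓ : ℕ} (Q : Fin ℓ → MvPolynomial (Fin m) ℂ) (d : Fin ℓ → ℂ) (lam : ℕ → ℝ)

lemma symbNorm_nonneg (τ : Fin m → ℤ) (j : ℕ) : 0 ≤ symbNorm Q d lam τ j :=
  Real.iSup_nonneg fun _ => norm_nonneg _

lemma norm_symb_le_symbNorm (r : Fin ℓ) (τ : Fin m → ℤ) (j : ℕ) :
    ‖symb Q d lam r τ j‖ ≤ symbNorm Q d lam τ j :=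
  le_ciSup (f := fun r => ‖symb Q d lam r τ j‖) (Set.finite_range _).bddAbove r

lemma symbNorm_mul_le {τ : Fin m → ℤ} {j : ℕ} {z : ℂ} {K : ℝ} (hK : 0 ≤ K)
    (h : ∀ r, ‖symb Q d lam r τ j * z‖ ≤ K) : symbNorm Q d lam τ j * ‖z‖ ≤ K := by
  rw [symbNorm, Real.iSup_mul_of_nonneg (norm_nonneg z)]
  exact Real.iSup_le (fun r => (norm_mul _ z).symm.trans_le (h r)) hK

end Symbol

section Hypoellipticity

variable {m n ℓ : ℕ} {σ μ : ℝ} (Q : Fin ℓ → MvPolynomial (Fin m) ℂ) (d : Fin ℓ → ℂ)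
  (lam : ℕ → ℝ)

theorem finite_setOf_symbNorm_le_of_globallyHypoelliptic (hσ : 0 < σ)
    (hnμ : 0 < 2 * (n : ℝ) * μ) (hGH : GloballyHypoelliptic m n ℓ σ μ Q d lam) {ε : ℝ}
    (hε : 0 < ε) :
    {p : (Fin m → ℤ) × ℕ | symbNorm Q d lam p.1 p.2 ≤ exp (-ε * wgt m n σ μ p.1 p.2)}.Finite := by
  set A := {p : (Fin m → ℤ) × ℕ | symbNorm Q d lam p.1 p.2 ≤ exp (-ε * wgt m n σ μ p.1 p.2)}
  let u : (Fin m → ℤ) → ℕ → ℂ := fun τ j => A.indicator 1 (τ, j)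
  have hu : ∀ τ j, ‖u τ j‖ ≤ 1 := fun τ j => by
    by_cases hp : (τ, j) ∈ A <;> simp [u, hp]
  have hdecay : ∀ r, GSDecay m n σ μ (fun τ j => symb Q d lam r τ j * u τ j) := fun r =>
    ⟨1, one_pos, ε, hε, fun τ j => by
      by_cases hp : (τ, j) ∈ A
      · simpa [u, hp] using (norm_symb_le_symbNorm Q d lam r τ j).trans hp
      · simp only [u, Set.indicator_of_notMem hp, mul_zero, norm_zero]
        positivity⟩
  refine (finite_setOf_one_le_norm_of_gsDecay hσ hnμ
    (hGH u (gsGrowth_of_norm_le_one hu) hdecay)).subset fun p hp => ?_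
  simp [u, hp]

theorem dioCond_of_forall_finite
    (h : ∀ ε > 0, {p : (Fin m → ℤ) × ℕ |
      symbNorm Q d lam p.1 p.2 ≤ exp (-ε * wgt m n σ μ p.1 p.2)}.Finite) :
    DioCond m n ℓ σ μ Q d lam := by
  intro ε hε
  obtain ⟨c, hc, hcA⟩ := exists_pos_forall_le_of_finite
    ((h ε hε).inter_of_left {p | symbNorm Q d lam p.1 p.2 ≠ 0})
    (f := fun p => symbNorm Q d lam p.1 p.2 * exp (ε * wgt m n σ μ p.1 p.2))
    fun p hp => mul_pos ((symbNorm_nonneg Q d lam p.1 p.2).lt_of_ne' hp.2) (exp_pos _)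
  refine ⟨min c 1, lt_min hc one_pos, fun τ j hne => ?_⟩
  by_cases hp : symbNorm Q d lam τ j ≤ exp (-ε * wgt m n σ μ τ j)
  · calc min c 1 * exp (-ε * wgt m n σ μ τ j)
        ≤ symbNorm Q d lam τ j * exp (ε * wgt m n σ μ τ j) * exp (-ε * wgt m n σ μ τ j) := by
          gcongr
          exact (min_le_left c 1).trans (hcA (τ, j) ⟨hp, hne⟩)
      _ = symbNorm Q d lam τ j := mul_exp_mul_exp_neg_mul _ _ _
  · calc min c 1 * exp (-ε * wgt m n σ μ τ j) ≤ 1 * exp (-ε * wgt m n σ μ τ j) := by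
          gcongr
          exact min_le_right c 1
      _ ≤ symbNorm Q d lam τ j := by rw [one_mul]; exact (not_le.1 hp).le

theorem globallyHypoelliptic_of_finite_of_dioCond
    (hN : {p : (Fin m → ℤ) × ℕ | symbNorm Q d lam p.1 p.2 = 0}.Finite)
    (hDC : DioCond m n ℓ σ μ Q d lam) : GloballyHypoelliptic m n ℓ σ μ Q d lam := by
  intro u _ hdecay
  obtain ⟨C, hC, ε, hε, hb⟩ := exists_forall_norm_le_of_forall_gsDecay hdecay
  obtain ⟨c, hc, hcb⟩ := hDC (ε / 2) (half_pos hε)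
  refine gsDecay_of_finite_of_forall_notMem hN (div_pos hC hc) (half_pos hε) fun τ j hp => ?_
  set E := exp (-(ε / 2) * wgt m n σ μ τ j)
  have hprod : symbNorm Q d lam τ j * ‖u τ j‖ ≤ C * exp (-ε * wgt m n σ μ τ j) :=
    symbNorm_mul_le Q d lam (by positivity) fun r => hb r τ j
  have hsq : exp (-ε * wgt m n σ μ τ j) = E * E := by rw [← exp_add]; ring_nf
  have hmul : ‖u τ j‖ * c * E ≤ C * E * E := by
    calc ‖u τ j‖ * c * E = c * E * ‖u τ j‖ := by ring
      _ ≤ symbNorm Q d lam τ j * ‖u τ j‖ := by gcongr; exact hcb τ j hp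
      _ ≤ C * E * E := by rw [mul_assoc, ← hsq]; exact hprod
  rw [div_mul_eq_mul_div, le_div_iff₀ hc]
  exact le_of_mul_le_mul_right hmul (exp_pos _)

end Hypoellipticity

theorem statement0_general (m n ℓ : ℕ) (hn : 1 ≤ n)
    (σ μ : ℝ) (hσ : 1 ≤ σ) (hμ : 1 / 2 ≤ μ)
    (Q : Fin ℓ → MvPolynomial (Fin m) ℂ) (d : Fin ℓ → ℂ) (lam : ℕ → ℝ) :
    GloballyHypoelliptic m n ℓ σ μ Q d lam ↔
      ({p : (Fin m → ℤ) × ℕ | symbNorm Q d lam p.1 p.2 = 0}.Finite ∧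
        DioCond m n ℓ σ μ Q d lam) := by
  have hσ₀ : 0 < σ := by linarith
  have hnμ : 0 < 2 * (n : ℝ) * μ := by
    have : (1 : ℝ) ≤ n := by exact_mod_cast hn
    nlinarith
  refine ⟨fun hGH => ⟨?_, ?_⟩, fun h => globallyHypoelliptic_of_finite_of_dioCond Q d lam h.1 h.2⟩
  · refine (finite_setOf_symbNorm_le_of_globallyHypoelliptic Q d lam hσ₀ hnμ hGH one_pos).subset
      fun p (hp : symbNorm Q d lam p.1 p.2 = 0) => ?_
    rw [Set.mem_ofPred_eq, hp]
    positivity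
  · exact dioCond_of_forall_finite Q d lam fun ε hε =>
      finite_setOf_symbNorm_le_of_globallyHypoelliptic Q d lam hσ₀ hnμ hGH hε

/-- GH ⟺ (the zero set `N` is finite and (DC) holds). -/
theorem statement0 (m n ℓ : ℕ) (hm : 1 ≤ m) (hn : 1 ≤ n) (hℓ : 1 ≤ ℓ)
    (σ μ : ℝ) (hσ : 1 ≤ σ) (hμ : 1 / 2 ≤ μ)
    (Q : Fin ℓ → MvPolynomial (Fin m) ℂ) (d : Fin ℓ → ℂ) (lam : ℕ → ℝ) :
    GloballyHypoelliptic m n ℓ σ μ Q d lam ↔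
      ({p : (Fin m → ℤ) × ℕ | symbNorm Q d lam p.1 p.2 = 0}.Finite ∧
        DioCond m n ℓ σ μ Q d lam) :=
  statement0_general m n ℓ hn σ μ hσ hμ Q d lam
end

section
/- Assume that for every ε > 0 there exists C > 0 such that ‖σ(τ,j)‖ ≥ C·exp(−ε·w(τ,j)) for all (τ,j) ∈ ℤ^m×ℕ with ‖σ(τ,j)‖ ≠ 0. Then the system is globally solvable at the Fourier coefficient level: for every admissible family (f_1,…,f_ℓ) in which each f_r has GS-growth there exists u : ℤ^m×ℕ → ℂ with GS-growth such that σ_r(τ,j)·u(τ,j) = f_r(τ,j) for all 1 ≤ r ≤ ℓ and all (τ,j). -/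
open Real

/-! Pick at every frequency an index `r₀` at which `|σ_r|` is maximal and put `u := f_{r₀} / σ_{r₀}`.
The compatibility conditions give `σ_r u = f_r` (when `σ_{r₀} = 0` every `σ_r` and `f_r` vanishes and
`u = 0`), and `|u| = |f_{r₀}| · ‖σ‖⁻¹` is a product of two functions of subexponential growth:
the first because the `f_r` are, the second by the Diophantine condition. -/

section SubexpGrowth

variable {X : Type*} (w : X → ℝ)

def SubexpGrowth (a : X → ℝ) : Prop :=
  ∀ ε > 0, ∃ C > 0, ∀ x, a x ≤ C * exp (ε * w x)

variable {w}

theorem SubexpGrowth.mono {a b : X → ℝ} (hb : SubexpGrowth w b) (hab : ∀ x, a x ≤ b x) :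
    SubexpGrowth w a := fun ε hε =>
  let ⟨C, hC, hbC⟩ := hb ε hε
  ⟨C, hC, fun x => (hab x).trans (hbC x)⟩

theorem SubexpGrowth.mul {a b : X → ℝ} (ha : SubexpGrowth w a) (hb : SubexpGrowth w b)
    (hb₀ : ∀ x, 0 ≤ b x) : SubexpGrowth w (a * b) := by
  intro ε hε
  obtain ⟨A, hA, haA⟩ := ha (ε / 2) (half_pos hε)
  obtain ⟨B, hB, hbB⟩ := hb (ε / 2) (half_pos hε)
  refine ⟨A * B, mul_pos hA hB, fun x => ?_⟩
  calc a x * b x ≤ (A * exp (ε / 2 * w x)) * (B * exp (ε / 2 * w x)) :=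
        mul_le_mul (haA x) (hbB x) (hb₀ x) (by positivity)
    _ = A * B * exp (ε * w x) := by
        rw [mul_mul_mul_comm, ← exp_add]
        ring_nf

theorem SubexpGrowth.of_forall_exists_le {ι : Type*} [Finite ι] [Nonempty ι]
    {a : ι → X → ℝ} (ha : ∀ r, SubexpGrowth w (a r)) {b : X → ℝ}
    (hb : ∀ x, ∃ r, b x ≤ a r x) : SubexpGrowth w b := by
  intro ε hε
  choose C hC haC using fun r => ha r ε hε
  obtain ⟨r₁, hr₁⟩ := Finite.exists_max C
  refine ⟨C r₁, hC r₁, fun x => ?_⟩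
  obtain ⟨r, hr⟩ := hb x
  calc b x ≤ C r * exp (ε * w x) := hr.trans (haC r x)
    _ ≤ C r₁ * exp (ε * w x) := by gcongr; exact hr₁ r

theorem subexpGrowth_inv_of_lower_bound {b : X → ℝ}
    (hb : ∀ ε > 0, ∃ C > 0, ∀ x, b x ≠ 0 → b x ≥ C * exp (-ε * w x)) :
    SubexpGrowth w b⁻¹ := by
  intro ε hε
  obtain ⟨C, hC, hbC⟩ := hb ε hε
  refine ⟨C⁻¹, inv_pos.2 hC, fun x => ?_⟩
  by_cases hx : b x = 0
  · simp only [Pi.inv_apply, hx, inv_zero]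
    positivity
  · calc (b x)⁻¹ ≤ (C * exp (-ε * w x))⁻¹ := inv_anti₀ (by positivity) (hbC x hx)
      _ = C⁻¹ * exp (ε * w x) := by rw [mul_inv, ← exp_neg, neg_mul, neg_neg]

end SubexpGrowth

theorem gsGrowth_iff {m n : ℕ} {σ μ : ℝ} {a : (Fin m → ℤ) → ℕ → ℂ} :
    GSGrowth m n σ μ a ↔
      SubexpGrowth (Function.uncurry (wgt m n σ μ)) (fun p => ‖a p.1 p.2‖) := by
  simp only [GSGrowth, SubexpGrowth, Prod.forall, Function.uncurry_apply_pair]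

theorem mul_div_eq_of_compatible {ι : Type*} {s f : ι → ℂ}
    (hcomp : ∀ r t, s r * f t = s t * f r) (hzero : ∀ r, s r = 0 → f r = 0)
    {r₀ : ι} (hmax : ∀ r, ‖s r‖ ≤ ‖s r₀‖) (r : ι) : s r * (f r₀ / s r₀) = f r := by
  by_cases h₀ : s r₀ = 0
  · have hr : s r = 0 := norm_le_zero_iff.1 (by simpa [h₀] using hmax r)
    simp [h₀, hzero r hr]
  · rw [mul_div_assoc', hcomp, mul_div_cancel_left₀ _ h₀]

theorem symbNorm_eq_of_forall_le {m ℓ : ℕ} {Q : Fin ℓ → MvPolynomial (Fin m) ℂ}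
    {d : Fin ℓ → ℂ} {lam : ℕ → ℝ} {τ : Fin m → ℤ} {j : ℕ} {r₀ : Fin ℓ}
    (hmax : ∀ r, ‖symb Q d lam r τ j‖ ≤ ‖symb Q d lam r₀ τ j‖) :
    symbNorm Q d lam τ j = ‖symb Q d lam r₀ τ j‖ :=
  have : Nonempty (Fin ℓ) := ⟨r₀⟩
  le_antisymm (ciSup_le hmax)
    (le_ciSup (f := fun r => ‖symb Q d lam r τ j‖) (Set.finite_range _).bddAbove r₀)

theorem statement6_general (m n ℓ : ℕ) (hℓ : 1 ≤ ℓ)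
    (σ μ : ℝ)
    (Q : Fin ℓ → MvPolynomial (Fin m) ℂ) (d : Fin ℓ → ℂ) (lam : ℕ → ℝ)
    (hDC : ∀ ε > 0, ∃ C > 0, ∀ τ j, symbNorm Q d lam τ j ≠ 0 →
      symbNorm Q d lam τ j ≥ C * Real.exp (-ε * wgt m n σ μ τ j)) :
    ∀ f : Fin ℓ → (Fin m → ℤ) → ℕ → ℂ, Admissible Q d lam f →
      (∀ r, GSGrowth m n σ μ (f r)) →
      ∃ u : (Fin m → ℤ) → ℕ → ℂ, GSGrowth m n σ μ u ∧
        ∀ r τ j, symb Q d lam r τ j * u τ j = f r τ j := by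
  intro f hadm hf
  have : Nonempty (Fin ℓ) := Fin.pos_iff_nonempty.1 hℓ
  choose R hR using fun τ j => Finite.exists_max fun r => ‖symb Q d lam r τ j‖
  have hnorm : ∀ τ j, symbNorm Q d lam τ j = ‖symb Q d lam (R τ j) τ j‖ :=
    fun τ j => symbNorm_eq_of_forall_le (hR τ j)
  refine ⟨fun τ j => f (R τ j) τ j / symb Q d lam (R τ j) τ j, ?_,
    fun r τ j => mul_div_eq_of_compatible (hadm.1 · · τ j) (hadm.2 · τ j) (hR τ j) r⟩
  have hnum : SubexpGrowth (Function.uncurry (wgt m n σ μ))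
      fun p => ‖f (R p.1 p.2) p.1 p.2‖ :=
    .of_forall_exists_le (fun r => gsGrowth_iff.1 (hf r)) fun p => ⟨R p.1 p.2, le_rfl⟩
  have hden : SubexpGrowth (Function.uncurry (wgt m n σ μ))
      fun p => (symbNorm Q d lam p.1 p.2)⁻¹ :=
    subexpGrowth_inv_of_lower_bound fun ε hε => by
      simpa only [Prod.forall, Function.uncurry_apply_pair] using hDC ε hε
  refine gsGrowth_iff.2 <| (hnum.mul hden fun p => ?_).mono fun p => ?_
  · rw [hnorm]
    positivity
  · simp only [Pi.mul_apply, hnorm, div_eq_mul_inv, norm_mul, norm_inv, le_refl]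

/-- the Diophantine condition (DC) implies global solvability. -/
theorem statement6 (m n ℓ : ℕ) (hm : 1 ≤ m) (hn : 1 ≤ n) (hℓ : 1 ≤ ℓ)
    (σ μ : ℝ) (hσ : 1 ≤ σ) (hμ : 1 / 2 ≤ μ)
    (Q : Fin ℓ → MvPolynomial (Fin m) ℂ) (d : Fin ℓ → ℂ) (lam : ℕ → ℝ)
    (hDC : ∀ ε > 0, ∃ C > 0, ∀ τ j, symbNorm Q d lam τ j ≠ 0 →
      symbNorm Q d lam τ j ≥ C * Real.exp (-ε * wgt m n σ μ τ j)) :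
    ∀ f : Fin ℓ → (Fin m → ℤ) → ℕ → ℂ, Admissible Q d lam f →
      (∀ r, GSGrowth m n σ μ (f r)) →
      ∃ u : (Fin m → ℤ) → ℕ → ℂ, GSGrowth m n σ μ u ∧
        ∀ r τ j, symb Q d lam r τ j * u τ j = f r τ j :=
  statement6_general m n ℓ hℓ σ μ Q d lam hDC
end

section
/- Assume the system is globally solvable at the Fourier coefficient level. If (f_1,…,f_ℓ) is an admissible family in which every f_r has GS-decay, then there exists u : ℤ^m×ℕ → ℂ with GS-decay such that σ_r(τ,j)·u(τ,j) = f_r(τ,j) for all 1 ≤ r ≤ ℓ and all (τ,j) (i.e., the solution can be taken to be a 'strong' solution, corresponding to an element of S_{σ,μ}). -/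
open Real

/-!
Multiplying an admissible family by the weight `exp (ε w)` keeps it admissible, and if every
`f_r` decays at rate `ε`, the twisted family only has GS-growth. Global solvability then yields a
solution `v` of GS-growth for the twisted system, and `u := exp (-ε w) v` solves the original
system; since `v` grows slower than `exp ((ε / 2) w)`, this `u` has GS-decay.
-/

open Filter Topology

section Weighted

variable {m n : ℕ} {σ μ : ℝ}

lemma exists_uniform_gsDecay_rate {ι : Type*} [Finite ι] {a : ι → (Fin m → ℤ) → ℕ → ℂ}
    (ha : ∀ i, GSDecay m n σ μ (a i)) :
    ∃ ε > 0, ∀ i, ∃ C > 0, ∀ τ j, ‖a i τ j‖ ≤ C * Real.exp (-ε * wgt m n σ μ τ j) := by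
  choose C hC ε hε hbd using ha
  have hsmall : ∀ᶠ δ in 𝓝[>] (0 : ℝ), ∀ i, δ ≤ ε i :=
    eventually_all.2 fun i => eventually_nhdsWithin_of_eventually_nhds (eventually_le_nhds (hε i))
  obtain ⟨δ, hδle, hδpos⟩ := (hsmall.and eventually_mem_nhdsWithin).exists
  refine ⟨δ, Set.mem_Ioi.1 hδpos, fun i => ⟨C i, hC i, fun τ j => (hbd i τ j).trans ?_⟩⟩
  have hw := wgt_nonneg (n := n) (σ := σ) (μ := μ) τ j
  gcongr
  · exact (hC i).le
  · exact hδle i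

variable (m n σ μ) in
noncomputable def expTwist (t : ℝ) (a : (Fin m → ℤ) → ℕ → ℂ) (τ : Fin m → ℤ) (j : ℕ) : ℂ :=
  a τ j * (Real.exp (t * wgt m n σ μ τ j) : ℂ)

lemma norm_expTwist (t : ℝ) (a : (Fin m → ℤ) → ℕ → ℂ) (τ : Fin m → ℤ) (j : ℕ) :
    ‖expTwist m n σ μ t a τ j‖ = ‖a τ j‖ * Real.exp (t * wgt m n σ μ τ j) := by
  rw [expTwist, norm_mul, Complex.norm_real, Real.norm_of_nonneg (Real.exp_pos _).le]

lemma expTwist_expTwist (s t : ℝ) (a : (Fin m → ℤ) → ℕ → ℂ) :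
    expTwist m n σ μ s (expTwist m n σ μ t a) = expTwist m n σ μ (s + t) a := by
  ext τ j
  simp only [expTwist, mul_assoc, ← Complex.ofReal_mul, ← Real.exp_add, add_mul, add_comm]

lemma expTwist_zero (a : (Fin m → ℤ) → ℕ → ℂ) : expTwist m n σ μ 0 a = a := by
  ext τ j
  simp [expTwist]

lemma gsGrowth_expTwist_of_le {a : (Fin m → ℤ) → ℕ → ℂ} {C ε t : ℝ}
    (ha : ∀ τ j, ‖a τ j‖ ≤ C * Real.exp (-ε * wgt m n σ μ τ j)) (hC : 0 < C) (ht : t ≤ ε) :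
    GSGrowth m n σ μ (expTwist m n σ μ t a) := by
  intro δ hδ
  refine ⟨C, hC, fun τ j => ?_⟩
  have hw := wgt_nonneg (n := n) (σ := σ) (μ := μ) τ j
  calc ‖expTwist m n σ μ t a τ j‖
      ≤ C * Real.exp (-ε * wgt m n σ μ τ j) * Real.exp (t * wgt m n σ μ τ j) := by
        rw [norm_expTwist]; gcongr; exact ha τ j
    _ = C * Real.exp ((t - ε) * wgt m n σ μ τ j) := by
        rw [mul_assoc, ← Real.exp_add]; ring_nf
    _ ≤ C * Real.exp (δ * wgt m n σ μ τ j) := by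
        gcongr
        nlinarith

lemma GSGrowth.gsDecay_expTwist_neg {a : (Fin m → ℤ) → ℕ → ℂ} (ha : GSGrowth m n σ μ a)
    {t : ℝ} (ht : 0 < t) : GSDecay m n σ μ (expTwist m n σ μ (-t) a) := by
  obtain ⟨C, hC, hbd⟩ := ha (t / 2) (half_pos ht)
  refine ⟨C, hC, t / 2, half_pos ht, fun τ j => ?_⟩
  calc ‖expTwist m n σ μ (-t) a τ j‖
      ≤ C * Real.exp (t / 2 * wgt m n σ μ τ j) * Real.exp (-t * wgt m n σ μ τ j) := by
        rw [norm_expTwist]; gcongr; exact hbd τ j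
    _ = C * Real.exp (-(t / 2) * wgt m n σ μ τ j) := by
        rw [mul_assoc, ← Real.exp_add]; ring_nf

end Weighted

lemma Admissible.mul_right {m ℓ : ℕ} {Q : Fin ℓ → MvPolynomial (Fin m) ℂ} {d : Fin ℓ → ℂ}
    {lam : ℕ → ℝ} {f : Fin ℓ → (Fin m → ℤ) → ℕ → ℂ} (hf : Admissible Q d lam f)
    (c : (Fin m → ℤ) → ℕ → ℂ) : Admissible Q d lam (fun r τ j => f r τ j * c τ j) :=
  ⟨fun r s τ j => by simp only [← mul_assoc, hf.1 r s τ j],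
    fun r τ j h => by simp only [hf.2 r τ j h, zero_mul]⟩

theorem statement7_general (m n ℓ : ℕ)
    (σ μ : ℝ)
    (Q : Fin ℓ → MvPolynomial (Fin m) ℂ) (d : Fin ℓ → ℂ) (lam : ℕ → ℝ)
    (hGS : GloballySolvable m n ℓ σ μ Q d lam)
    (f : Fin ℓ → (Fin m → ℤ) → ℕ → ℂ) (hf : Admissible Q d lam f)
    (hfdec : ∀ r, GSDecay m n σ μ (f r)) :
    ∃ u : (Fin m → ℤ) → ℕ → ℂ, GSDecay m n σ μ u ∧
      ∀ r τ j, symb Q d lam r τ j * u τ j = f r τ j := by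
  obtain ⟨ε, hε, hrate⟩ := exists_uniform_gsDecay_rate hfdec
  obtain ⟨v, hv, hsol⟩ := hGS (fun r => expTwist m n σ μ ε (f r))
    (hf.mul_right fun τ j => (Real.exp (ε * wgt m n σ μ τ j) : ℂ))
    fun r => by
      obtain ⟨C, hC, hbd⟩ := hrate r
      exact gsGrowth_expTwist_of_le hbd hC le_rfl
  refine ⟨expTwist m n σ μ (-ε) v, hv.gsDecay_expTwist_neg hε, fun r τ j => ?_⟩
  have hsol' : (fun τ j => symb Q d lam r τ j * v τ j) = expTwist m n σ μ ε (f r) :=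
    funext₂ (hsol r)
  calc symb Q d lam r τ j * expTwist m n σ μ (-ε) v τ j
      = expTwist m n σ μ (-ε) (fun τ j => symb Q d lam r τ j * v τ j) τ j := by
        simp only [expTwist, mul_assoc]
    _ = f r τ j := by rw [hsol', expTwist_expTwist, neg_add_cancel, expTwist_zero]

/-- if the system is globally solvable and the admissible data have
GS-decay, then a solution with GS-decay (a strong solution) exists. -/
theorem statement7 (m n ℓ : ℕ) (hm : 1 ≤ m) (hn : 1 ≤ n) (hℓ : 1 ≤ ℓ)
    (σ μ : ℝ) (hσ : 1 ≤ σ) (hμ : 1 / 2 ≤ μ)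
    (Q : Fin ℓ → MvPolynomial (Fin m) ℂ) (d : Fin ℓ → ℂ) (lam : ℕ → ℝ)
    (hGS : GloballySolvable m n ℓ σ μ Q d lam)
    (f : Fin ℓ → (Fin m → ℤ) → ℕ → ℂ) (hf : Admissible Q d lam f)
    (hfdec : ∀ r, GSDecay m n σ μ (f r)) :
    ∃ u : (Fin m → ℤ) → ℕ → ℂ, GSDecay m n σ μ u ∧
      ∀ r τ j, symb Q d lam r τ j * u τ j = f r τ j :=
  statement7_general m n ℓ σ μ Q d lam hGS f hf hfdec
end

section
/- Let n ≥ 1 be an integer, σ ≥ 1, μ ≥ 1/2 and M > 0 real numbers with M·μ ≤ σ, let d ∈ ℂ, and let λ : ℕ → ℝ satisfy |λ(j)| ≤ ρ·(j+1)^{M/(2n)} for all j ∈ ℕ, for some ρ > 0. Then the following two conditions are equivalent: (i) for every ε > 0 there exists C > 0 such that |τ + d·λ(j)| ≥ C·exp(−ε(|τ|^{1/σ} + j^{1/(2nμ)})) for all (τ,j) ∈ ℤ × ℕ; (ii) for every ε > 0 there exists C > 0 such that |τ + d·λ(j)| ≥ C·exp(−ε·j^{1/(2nμ)}) for all (τ,j)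 ∈ ℤ × ℕ (equivalently, inf_{τ∈ℤ} |τ + d·λ(j)| ≥ C·exp(−ε·j^{1/(2nμ)}) for all j). -/
open Real

/-!
The implication (ii) ⇒ (i) holds because the weight in (i) is larger. For (i) ⇒ (ii), only the
near-resonant pairs with `|τ + d λ(j)| < 1` matter, the others being bounded below by `1`. There
`|τ| ≤ ‖d‖ |λ(j)| + 1 ≲ (j + 1)^{M/(2n)}`, so `|τ|^{1/σ} ≲ (j + 1)^{M/(2nσ)} ≲ j^{1/(2nμ)} + 1`
because `M μ ≤ σ`. Hence the two-parameter weight is at most `K (j^{1/(2nμ)} + 1)` on these pairs,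
and (i) applied with `ε / K` gives (ii).
-/

def HasExpLowerBound {ι : Type*} (F w : ι → ℝ) : Prop :=
  ∀ ε > 0, ∃ C > 0, ∀ i, C * exp (-ε * w i) ≤ F i

namespace HasExpLowerBound

variable {ι : Type*} {F v w : ι → ℝ}

theorem mono (h : HasExpLowerBound F v) (hvw : ∀ i, v i ≤ w i) : HasExpLowerBound F w := by
  intro ε hε
  obtain ⟨C, hC, hF⟩ := h ε hε
  refine ⟨C, hC, fun i => le_trans ?_ (hF i)⟩
  gcongr C * exp ?_
  exact mul_le_mul_of_nonpos_left (hvw i) (neg_nonpos.2 hε.le)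

theorem of_le_mul_add_one (h : HasExpLowerBound F w) {K : ℝ} (hK : 0 < K) (hv : ∀ i, 0 ≤ v i)
    (hwv : ∀ i, F i < 1 → w i ≤ K * (v i + 1)) : HasExpLowerBound F v := by
  intro ε hε
  obtain ⟨C, hC, hF⟩ := h (ε / K) (by positivity)
  refine ⟨min 1 (C * exp (-ε)), by positivity, fun i => ?_⟩
  by_cases hi : 1 ≤ F i
  · calc min 1 (C * exp (-ε)) * exp (-ε * v i) ≤ 1 * 1 := by
          gcongr
          · exact min_le_left _ _
          · exact exp_le_one_iff.2 (by nlinarith [hv i])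
      _ ≤ F i := by simpa using hi
  · calc min 1 (C * exp (-ε)) * exp (-ε * v i) ≤ C * exp (-ε) * exp (-ε * v i) := by
          gcongr
          exact min_le_right _ _
      _ = C * exp (-(ε / K) * (K * (v i + 1))) := by
          rw [mul_assoc, ← exp_add]
          field_simp
          ring_nf
      _ ≤ C * exp (-(ε / K) * w i) := by
          gcongr C * exp ?_
          exact mul_le_mul_of_nonpos_left (hwv i (not_le.1 hi)) (neg_nonpos.2 (by positivity))
      _ ≤ F i := hF i

end HasExpLowerBound

theorem rpow_le_rpow_mul_rpow_add_one {x y A a p β : ℝ} (hx : 0 ≤ x) (hy : 0 ≤ y) (hA : 0 ≤ A)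
    (hp : 0 ≤ p) (hβ : 0 ≤ β) (hβ1 : β ≤ 1) (hap : a * p ≤ β) (hxy : x ≤ A * (y + 1) ^ a) :
    x ^ p ≤ A ^ p * (y ^ β + 1) := calc
  x ^ p ≤ (A * (y + 1) ^ a) ^ p := rpow_le_rpow hx hxy hp
  _ = A ^ p * (y + 1) ^ (a * p) := by rw [mul_rpow hA (by positivity), ← rpow_mul (by positivity)]
  _ ≤ A ^ p * (y + 1) ^ β := by gcongr; linarith
  _ ≤ A ^ p * (y ^ β + 1) := by gcongr; simpa using rpow_add_le_add_rpow hy zero_le_one hβ hβ1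

theorem abs_intCast_le_norm_add_one {τ : ℤ} {z : ℂ} (h : ‖(τ : ℂ) + z‖ < 1) :
    |(τ : ℝ)| ≤ ‖z‖ + 1 := by
  have := norm_le_add_norm_add (τ : ℂ) z
  rw [Complex.norm_intCast] at this
  linarith

/-- for the single operator `𝓛 = D_t + d P(x,D_x)` with symbol
`τ + d λ_j`, the two-parameter Diophantine lower bound is equivalent to the
one-parameter bound on `inf_{τ∈ℤ} |τ + d λ_j|`. -/
theorem statement16 (n : ℕ) (hn : 1 ≤ n) (σ μ M ρ : ℝ)
    (hσ : 1 ≤ σ) (hμ : 1 / 2 ≤ μ) (hMpos : 0 < M) (hMμ : M * μ ≤ σ)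
    (d : ℂ) (lam : ℕ → ℝ) (hρ : 0 < ρ)
    (hlam : ∀ j : ℕ, |lam j| ≤ ρ * ((j : ℝ) + 1) ^ (M / (2 * n))) :
    (∀ ε > 0, ∃ C > 0, ∀ (τ : ℤ) (j : ℕ),
        ‖(τ : ℂ) + d * (lam j : ℂ)‖ ≥
          C * Real.exp (-ε * ((|τ| : ℝ) ^ (1 / σ) + (j : ℝ) ^ (1 / (2 * n * μ))))) ↔
    (∀ ε > 0, ∃ C > 0, ∀ (τ : ℤ) (j : ℕ),
        ‖(τ : ℂ) + d * (lam j : ℂ)‖ ≥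
          C * Real.exp (-ε * (j : ℝ) ^ (1 / (2 * n * μ)))) := by
  let F : ℤ × ℕ → ℝ := fun i => ‖(i.1 : ℂ) + d * (lam i.2 : ℂ)‖
  set β := 1 / (2 * n * μ)
  suffices HasExpLowerBound F (fun i => |(i.1 : ℝ)| ^ (1 / σ) + (i.2 : ℝ) ^ β) ↔
      HasExpLowerBound F (fun i => (i.2 : ℝ) ^ β) by
    simpa only [HasExpLowerBound, Prod.forall, ge_iff_le] using this
  have hn1 : (1 : ℝ) ≤ n := by exact_mod_cast hn
  have hβ1 : β ≤ 1 := by rw [div_le_one (by positivity)]; nlinarith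
  have hexponent : M / (2 * n) * (1 / σ) ≤ β := by
    rw [div_mul_div_comm, mul_one, div_le_div_iff₀ (by positivity) (by positivity)]
    nlinarith
  set A := ‖d‖ * ρ + 1
  refine ⟨fun h => h.of_le_mul_add_one (K := A ^ (1 / σ) + 1) (by positivity)
    (fun _ => by positivity) ?_, fun h => h.mono fun _ => le_add_of_nonneg_left (by positivity)⟩
  rintro ⟨τ, j⟩ hsmall
  have hτ : |(τ : ℝ)| ≤ A * ((j : ℝ) + 1) ^ (M / (2 * n)) := by
    have hone : 1 ≤ ((j : ℝ) + 1) ^ (M / (2 * n)) :=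
      one_le_rpow (le_add_of_nonneg_left j.cast_nonneg) (by positivity)
    have := abs_intCast_le_norm_add_one hsmall
    rw [norm_mul, Complex.norm_real, norm_eq_abs] at this
    nlinarith [mul_le_mul_of_nonneg_left (hlam j) (norm_nonneg d)]
  have hτ_rpow := rpow_le_rpow_mul_rpow_add_one (abs_nonneg _) j.cast_nonneg (by positivity)
    (by positivity) (by positivity) hβ1 hexponent hτ
  dsimp only
  nlinarith [hτ_rpow]
end

section
/- Let σ ≥ 1 and μ ≥ 1/2 be real numbers and let α = (α₁,α₂) ∈ ℝ² have at least one irrational coordinate. Assume α is not an exponential Liouville vector of order σ, i.e., for every ε > 0 there exists C > 0 such that ‖τ − ℓα‖ ≥ C·exp(−ε|ℓ|^{1/σ}) for all τ ∈ ℤ² and all ℓ ∈ ℤ ∖ {0}. Then max(|τ₁ + α₁(2j+1)|, |τ₂ + α₂(2j+1)|) > 0 for every (τ,j) ∈ ℤ² × ℕ, and for every ε > 0 there exists C > 0 such that max(|τ₁ + α₁(2j+1)|, |τ₂ + α₂(2j+1)|) ≥ C·exp(−ε(‖τ‖^{1/σ} + j^{1/(2μ)})) for all (τ,j) ∈ ℤ²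 × ℕ. -/
set_option maxHeartbeats 1000000


open Real

open NNReal in
private lemma rpow_subadd {a b p : ℝ} (ha : 0 ≤ a) (hb : 0 ≤ b) (hp : 0 ≤ p) (hp1 : p ≤ 1) :
    (a + b) ^ p ≤ a ^ p + b ^ p := by
  have h := NNReal.rpow_add_le_add_rpow a.toNNReal b.toNNReal hp hp1
  have h2 : ((a.toNNReal + b.toNNReal : ℝ≥0) : ℝ) ^ p ≤
      ((a.toNNReal : ℝ)) ^ p + ((b.toNNReal : ℝ)) ^ p := by exact_mod_cast h
  simpa [Real.coe_toNNReal _ ha, Real.coe_toNNReal _ hb] using h2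

private lemma tri2 (a b c d : ℝ) :
    Real.sqrt (a ^ 2 + b ^ 2) - Real.sqrt (c ^ 2 + d ^ 2) ≤
      Real.sqrt ((a - c) ^ 2 + (b - d) ^ 2) := by
  have h := norm_sub_norm_le ((WithLp.equiv 2 (Fin 2 → ℝ)).symm ![a, b])
    ((WithLp.equiv 2 (Fin 2 → ℝ)).symm ![c, d])
  simpa [EuclideanSpace.norm_eq, Fin.sum_univ_two, sq_abs] using h

private lemma key (σ μ : ℝ) (hσ : 1 ≤ σ) (hμ : 1 / 2 ≤ μ)
    (α : Fin 2 → ℝ) (hNpos : 0 < Real.sqrt (α 0 ^ 2 + α 1 ^ 2))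
    (hLiou : ∀ ε > 0, ∃ C > 0, ∀ (τ : Fin 2 → ℤ) (l : ℤ), l ≠ 0 →
      Real.sqrt (∑ i, ((τ i : ℝ) - (l : ℝ) * α i) ^ 2) ≥
        C * Real.exp (-ε * |(l : ℝ)| ^ (1 / σ))) :
    ∀ ε > 0, ∃ C > 0, ∀ (τ : Fin 2 → ℤ) (j : ℕ),
      max |(τ 0 : ℝ) + α 0 * (2 * (j : ℝ) + 1)| |(τ 1 : ℝ) + α 1 * (2 * (j : ℝ) + 1)| ≥
        C * Real.exp (-ε * (eNormZ τ ^ (1 / σ) + (j : ℝ) ^ (1 / (2 * μ)))) := by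
  set N := Real.sqrt (α 0 ^ 2 + α 1 ^ 2) with hNdef
  have hσ0 : 0 < σ := lt_of_lt_of_le one_pos hσ
  have hp0 : 0 < 1 / σ := by positivity
  have hp1 : 1 / σ ≤ 1 := by rw [div_le_one hσ0]; exact hσ
  have hK : 0 < (1 / N) ^ (1 / σ) := Real.rpow_pos_of_pos (by positivity) _
  set K := (1 / N) ^ (1 / σ) with hKdef
  clear_value N K
  intro ε hε
  obtain ⟨C', hC'pos, hC'⟩ := hLiou (ε / K) (by positivity)
  have hs2 : (0:ℝ) < Real.sqrt 2 := Real.sqrt_pos.mpr (by norm_num)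
  refine ⟨min (Real.sqrt 2)⁻¹ (C' * Real.exp (-ε) / Real.sqrt 2),
    lt_min (by positivity) (by positivity), ?_⟩
  intro τ j
  have hTeq : eNormZ τ = Real.sqrt (((τ 0 : ℝ)) ^ 2 + ((τ 1 : ℝ)) ^ 2) := by
    simp [eNormZ, Fin.sum_univ_two]
  set T := eNormZ τ with hT
  clear_value T
  have hT0 : 0 ≤ T := by rw [hTeq]; exact Real.sqrt_nonneg _
  have hj0 : (0:ℝ) ≤ (j : ℝ) := Nat.cast_nonneg j
  set L : ℝ := 2 * (j : ℝ) + 1 with hL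
  have hL1 : (1:ℝ) ≤ L := by rw [hL]; linarith
  set l : ℤ := -(2 * (j : ℤ) + 1) with hl
  have hl0 : l ≠ 0 := by rw [hl]; omega
  have habs : |(l : ℝ)| = L := by
    rw [hl, hL]; push_cast
    rw [abs_neg, abs_of_nonneg (by linarith)]
  -- the Diophantine lower bound for D
  set D := Real.sqrt (((τ 0 : ℝ) + α 0 * L) ^ 2 + ((τ 1 : ℝ) + α 1 * L) ^ 2) with hD
  have hD0 : 0 ≤ D := Real.sqrt_nonneg _
  have hDlb : D ≥ C' * Real.exp (-(ε / K) * L ^ (1 / σ)) := by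
    have h := hC' τ l hl0
    rw [Fin.sum_univ_two, habs] at h
    have e0 : (τ 0 : ℝ) - (l : ℝ) * α 0 = (τ 0 : ℝ) + α 0 * L := by
      rw [hl, hL]; push_cast; ring
    have e1 : (τ 1 : ℝ) - (l : ℝ) * α 1 = (τ 1 : ℝ) + α 1 * L := by
      rw [hl, hL]; push_cast; ring
    rw [e0, e1] at h
    exact h
  -- max vs D
  set M := max |(τ 0 : ℝ) + α 0 * (2 * (j : ℝ) + 1)| |(τ 1 : ℝ) + α 1 * (2 * (j : ℝ) + 1)|
    with hM
  have h0 : |(τ 0 : ℝ) + α 0 * L| ≤ M := by rw [hM, hL]; exact le_max_left _ _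
  have h1 : |(τ 1 : ℝ) + α 1 * L| ≤ M := by rw [hM, hL]; exact le_max_right _ _
  have hM0 : 0 ≤ M := le_trans (abs_nonneg _) h0
  clear_value L l D M
  have hMD : D ≤ Real.sqrt 2 * M := by
    rw [hD]
    have hsq : ((τ 0 : ℝ) + α 0 * L) ^ 2 + ((τ 1 : ℝ) + α 1 * L) ^ 2 ≤ 2 * M ^ 2 := by
      nlinarith [sq_abs ((τ 0 : ℝ) + α 0 * L), sq_abs ((τ 1 : ℝ) + α 1 * L),
        abs_nonneg ((τ 0 : ℝ) + α 0 * L), abs_nonneg ((τ 1 : ℝ) + α 1 * L)]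
    calc Real.sqrt (((τ 0 : ℝ) + α 0 * L) ^ 2 + ((τ 1 : ℝ) + α 1 * L) ^ 2)
        ≤ Real.sqrt (2 * M ^ 2) := Real.sqrt_le_sqrt hsq
      _ = Real.sqrt 2 * M := by rw [Real.sqrt_mul (by norm_num), Real.sqrt_sq hM0]
  have hEnn : 0 ≤ T ^ (1 / σ) + (j : ℝ) ^ (1 / (2 * μ)) :=
    add_nonneg (Real.rpow_nonneg hT0 _) (Real.rpow_nonneg hj0 _)
  by_cases hcase : L * N ≤ T + 1
  · -- Diophantine case
    have h1' : L ≤ (T + 1) * (1 / N) := by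
      rw [← div_eq_mul_one_div]
      exact (le_div_iff₀ hNpos).mpr hcase
    have h2 : L ^ (1 / σ) ≤ ((T + 1) * (1 / N)) ^ (1 / σ) :=
      Real.rpow_le_rpow (by linarith) h1' hp0.le
    rw [Real.mul_rpow (by linarith) (by positivity), ← hKdef] at h2
    have h3 : (T + 1) ^ (1 / σ) ≤ T ^ (1 / σ) + 1 := by
      have := rpow_subadd hT0 zero_le_one hp0.le hp1
      simpa using this
    have hLp : L ^ (1 / σ) ≤ (T ^ (1 / σ) + 1) * K := by
      calc L ^ (1 / σ) ≤ (T + 1) ^ (1 / σ) * K := h2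
        _ ≤ (T ^ (1 / σ) + 1) * K := mul_le_mul_of_nonneg_right h3 hK.le
    have hexp : (ε / K) * L ^ (1 / σ) ≤ ε * T ^ (1 / σ) + ε := by
      have hh := mul_le_mul_of_nonneg_left hLp (le_of_lt (div_pos hε hK))
      have heq : (ε / K) * ((T ^ (1 / σ) + 1) * K) = ε * T ^ (1 / σ) + ε := by
        field_simp
      rw [heq] at hh
      exact hh
    have hj' : 0 ≤ ε * (j : ℝ) ^ (1 / (2 * μ)) :=
      mul_nonneg hε.le (Real.rpow_nonneg hj0 _)
    have hexp2 : Real.exp (-ε * (T ^ (1 / σ) + (j:ℝ) ^ (1 / (2*μ))) + (-ε)) ≤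
        Real.exp (-(ε / K) * L ^ (1 / σ)) := by
      apply Real.exp_le_exp.mpr
      have hgoal : -ε * (T ^ (1 / σ) + (j:ℝ) ^ (1 / (2*μ))) + (-ε)
          = -(ε * T ^ (1 / σ) + ε) - ε * (j:ℝ) ^ (1 / (2*μ)) := by ring
      rw [hgoal, neg_mul]
      linarith [hexp, hj']
    calc M = (Real.sqrt 2 * M) / Real.sqrt 2 := (mul_div_cancel_left₀ M hs2.ne').symm
      _ ≥ D / Real.sqrt 2 := (div_le_div_iff_of_pos_right hs2).mpr hMD
      _ ≥ (C' * Real.exp (-(ε / K) * L ^ (1 / σ))) / Real.sqrt 2 := (div_le_div_iff_of_pos_right hs2).mpr hDlb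
      _ ≥ (C' * Real.exp (-ε * (T ^ (1 / σ) + (j:ℝ) ^ (1 / (2*μ))) + (-ε))) / Real.sqrt 2 :=
          (div_le_div_iff_of_pos_right hs2).mpr (mul_le_mul_of_nonneg_left hexp2 hC'pos.le)
      _ = (C' * Real.exp (-ε) / Real.sqrt 2) *
            Real.exp (-ε * (T ^ (1 / σ) + (j:ℝ) ^ (1 / (2*μ)))) := by
          rw [Real.exp_add]; ring
      _ ≥ min (Real.sqrt 2)⁻¹ (C' * Real.exp (-ε) / Real.sqrt 2) *
            Real.exp (-ε * (T ^ (1 / σ) + (j:ℝ) ^ (1 / (2*μ)))) := by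
          apply mul_le_mul_of_nonneg_right (min_le_right _ _) (Real.exp_nonneg _)
  · -- far case : D > 1
    push_neg at hcase
    have htri : L * N - T ≤ D := by
      have h := tri2 (α 0 * L) (α 1 * L) (-(τ 0 : ℝ)) (-(τ 1 : ℝ))
      have e1 : (α 0 * L) ^ 2 + (α 1 * L) ^ 2 = L ^ 2 * (α 0 ^ 2 + α 1 ^ 2) := by ring
      have e2 : Real.sqrt ((α 0 * L) ^ 2 + (α 1 * L) ^ 2) = L * N := by
        rw [e1, Real.sqrt_mul (sq_nonneg L), Real.sqrt_sq (by linarith), hNdef]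
      have e3 : Real.sqrt ((-(τ 0 : ℝ)) ^ 2 + (-(τ 1 : ℝ)) ^ 2) = T := by
        rw [neg_pow, neg_pow]; rw [hTeq]; ring_nf
      have e4 : (α 0 * L - -(τ 0 : ℝ)) = (τ 0 : ℝ) + α 0 * L := by ring
      have e5 : (α 1 * L - -(τ 1 : ℝ)) = (τ 1 : ℝ) + α 1 * L := by ring
      rw [e2, e3, e4, e5, ← hD] at h
      exact h
    have hD1 : 1 < D := by linarith
    have hexp1 : Real.exp (-ε * (T ^ (1 / σ) + (j:ℝ) ^ (1 / (2*μ)))) ≤ 1 := by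
      apply Real.exp_le_one_iff.mpr
      nlinarith
    calc M = (Real.sqrt 2 * M) / Real.sqrt 2 := (mul_div_cancel_left₀ M hs2.ne').symm
      _ ≥ D / Real.sqrt 2 := (div_le_div_iff_of_pos_right hs2).mpr hMD
      _ ≥ 1 / Real.sqrt 2 := (div_le_div_iff_of_pos_right hs2).mpr hD1.le
      _ = (Real.sqrt 2)⁻¹ := one_div _
      _ ≥ (Real.sqrt 2)⁻¹ * Real.exp (-ε * (T ^ (1 / σ) + (j:ℝ) ^ (1 / (2*μ)))) := by
          nlinarith [Real.exp_nonneg (-ε * (T ^ (1 / σ) + (j:ℝ) ^ (1 / (2*μ)))),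
            inv_nonneg.mpr hs2.le]
      _ ≥ min (Real.sqrt 2)⁻¹ (C' * Real.exp (-ε) / Real.sqrt 2) *
            Real.exp (-ε * (T ^ (1 / σ) + (j:ℝ) ^ (1 / (2*μ)))) := by
          apply mul_le_mul_of_nonneg_right (min_le_left _ _) (Real.exp_nonneg _)

/-- if `α ∈ ℝ²` has an irrational coordinate and is not an
exponential Liouville vector of order `σ`, then the symbols
`τ_r + α_r (2j+1)` of the system `(D_{t₁} + α₁ H, D_{t₂} + α₂ H)` never vanish
simultaneously and satisfy the Diophantine lower bound characterizing
`S_{σ,μ}`-global hypoellipticity (with `n = 1`). -/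
theorem statement17 (σ μ : ℝ) (hσ : 1 ≤ σ) (hμ : 1 / 2 ≤ μ)
    (α : Fin 2 → ℝ) (hirr : Irrational (α 0) ∨ Irrational (α 1))
    (hLiou : ∀ ε > 0, ∃ C > 0, ∀ (τ : Fin 2 → ℤ) (l : ℤ), l ≠ 0 →
      Real.sqrt (∑ i, ((τ i : ℝ) - (l : ℝ) * α i) ^ 2) ≥
        C * Real.exp (-ε * |(l : ℝ)| ^ (1 / σ))) :
    (∀ (τ : Fin 2 → ℤ) (j : ℕ),
      0 < max |(τ 0 : ℝ) + α 0 * (2 * (j : ℝ) + 1)| |(τ 1 : ℝ) + α 1 * (2 * (j : ℝ) + 1)|) ∧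
    (∀ ε > 0, ∃ C > 0, ∀ (τ : Fin 2 → ℤ) (j : ℕ),
      max |(τ 0 : ℝ) + α 0 * (2 * (j : ℝ) + 1)| |(τ 1 : ℝ) + α 1 * (2 * (j : ℝ) + 1)| ≥
        C * Real.exp (-ε * (eNormZ τ ^ (1 / σ) + (j : ℝ) ^ (1 / (2 * μ))))) := by
  have hNpos : 0 < Real.sqrt (α 0 ^ 2 + α 1 ^ 2) := by
    apply Real.sqrt_pos.mpr
    rcases hirr with h | h
    · have := h.ne_int 0
      have hne : α 0 ≠ 0 := by simpa using this
      positivity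
    · have := h.ne_int 0
      have hne : α 1 ≠ 0 := by simpa using this
      positivity
  have hk := key σ μ hσ hμ α hNpos hLiou
  refine ⟨?_, hk⟩
  intro τ j
  obtain ⟨C, hC, h⟩ := hk 1 one_pos
  exact lt_of_lt_of_le (by positivity) (h τ j)
end
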